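/- Let W ∈ ℝ^{p₁×p₂} be a symmetric-structured block matrix of the form [[B − B̃, D₂ᵀ − D̃₂ᵀ],[D₁ − D̃₁, Δ]] where Δ = D₁B⁻¹D₂ᵀ − D̃₁B̃⁻¹D̃₂ᵀ, with B, B̃ invertible. If ‖D₁B⁻¹‖ ∨ ‖B⁻¹D₂ᵀ‖ ≤ ρ and ‖D̃₁B̃⁻¹‖ ∨ ‖B̃⁻¹D̃₂ᵀ‖ ≤ θ with ρ ≤ (4+√3)/(3√3) and θ ≤ 1/√3, then ‖W‖_F² ≤ 5(‖B − B̃‖_F² + ‖D₁ − D̃₁‖_F² + ‖D₂ − D̃₂‖_F²). -/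

import Mathlib

/-!
Writing `Δ = D₁B⁻¹D₂ᵀ − D̃₁B̃⁻¹D̃₂ᵀ` as
`D₁B⁻¹ (D₂ − D̃₂)ᵀ + D₁B⁻¹ (B̃ − B) B̃⁻¹D̃₂ᵀ + (D₁ − D̃₁) B̃⁻¹D̃₂ᵀ`
and using `‖XY‖_F ≤ ‖X‖ ‖Y‖_F` (and its transpose) on each term gives
`‖Δ‖_F ≤ ρ ‖D₂ − D̃₂‖_F + ρθ ‖B − B̃‖_F + θ ‖D₁ − D̃₁‖_F`.
On the stated ranges `ρ², θ², (ρθ)² ≤ 4/3`, so by `(x + y + z)² ≤ 3 (x² + y² + z²)` the block `Δ`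
contributes at most four times the right-hand sum, and the other three blocks of `W` contribute
exactly that sum.
-/

open Matrix
noncomputable section

/-- Frobenius norm of a real matrix. -/
def frob {m n : Type*} [Fintype m] [Fintype n] (A : Matrix m n ℝ) : ℝ :=
  Real.sqrt (∑ i, ∑ j, (A i j) ^ 2)

/-- Spectral (operator ℓ²→ℓ²) norm of a real matrix. -/
def spec {m n : Type*} [Fintype m] [Fintype n] [DecidableEq n] (A : Matrix m n ℝ) : ℝ :=
  ‖LinearMap.toContinuousLinearMap (Matrix.toEuclideanLin A)‖

/-- Nuclear norm: sum of singular values (square roots of eigenvalues of AᵀA). -/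
def nuc {m n : Type*} [Fintype m] [Fintype n] [DecidableEq n] (A : Matrix m n ℝ) : ℝ :=
  ∑ i, Real.sqrt ((Matrix.isHermitian_conjTranspose_mul_self A).eigenvalues i)

lemma mul_inv_mul_sub_mul_inv_mul {m n k R : Type*} [Fintype n] [DecidableEq n] [CommRing R]
    {B B' : Matrix n n R} (hB : IsUnit B) (hB' : IsUnit B')
    (D₁ D₁' : Matrix m n R) (D₂ D₂' : Matrix n k R) :
    D₁ * B⁻¹ * D₂ - D₁' * B'⁻¹ * D₂' =
      D₁ * B⁻¹ * (D₂ - D₂') + D₁ * B⁻¹ * ((B' - B) * (B'⁻¹ * D₂')) +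
        (D₁ - D₁') * (B'⁻¹ * D₂') := by
  rw [isUnit_iff_isUnit_det] at hB hB'
  simp only [Matrix.mul_sub, Matrix.sub_mul, Matrix.mul_assoc,
    mul_nonsing_inv_cancel_left _ _ hB', nonsing_inv_mul_cancel_left _ _ hB]
  abel

lemma sq_mul_add_mul_add_mul_le {u v w M : ℝ} (hu : u ^ 2 ≤ M) (hv : v ^ 2 ≤ M)
    (hw : w ^ 2 ≤ M) (a b c : ℝ) :
    (u * a + v * b + w * c) ^ 2 ≤ 3 * M * (a ^ 2 + b ^ 2 + c ^ 2) := by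
  nlinarith [sq_nonneg (u * a - v * b), sq_nonneg (u * a - w * c), sq_nonneg (v * b - w * c),
    mul_le_mul_of_nonneg_right hu (sq_nonneg a), mul_le_mul_of_nonneg_right hv (sq_nonneg b),
    mul_le_mul_of_nonneg_right hw (sq_nonneg c)]

lemma sq_le_four_thirds_of_le {ρ : ℝ} (hρ0 : 0 ≤ ρ) (hρ : ρ ≤ (4 + √3) / (3 * √3)) :
    ρ ^ 2 ≤ 4 / 3 := by
  have hs : √3 ^ 2 = 3 := Real.sq_sqrt (by norm_num)
  -- `(4 + √3) / (3√3) ≤ 2 / √3` since `√3 ≤ 2`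
  have h : ρ * √3 ≤ 2 := by
    rw [le_div_iff₀ (by positivity)] at hρ
    nlinarith [Real.sqrt_nonneg 3]
  have h2 := pow_le_pow_left₀ (by positivity) h 2
  rw [mul_pow, hs] at h2
  linarith

lemma le_one_of_le_one_div_sqrt_three {θ : ℝ} (hθ : θ ≤ 1 / √3) : θ ≤ 1 := by
  refine hθ.trans ?_
  rw [div_le_one (by positivity), Real.one_le_sqrt]
  norm_num

section Norms

variable {m n k : Type*} [Fintype m] [Fintype n] [Fintype k]

section Frobenius

attribute [local instance] Matrix.frobeniusNormedAddCommGroup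

lemma frob_eq_norm (A : Matrix m n ℝ) : frob A = ‖A‖ := by
  simp [frobenius_norm_def, frob, Real.sqrt_eq_rpow]

lemma frob_nonneg (A : Matrix m n ℝ) : 0 ≤ frob A := Real.sqrt_nonneg _

lemma frob_add_le (A B : Matrix m n ℝ) : frob (A + B) ≤ frob A + frob B := by
  simpa only [frob_eq_norm] using norm_add_le A B

lemma frob_sub_comm (A B : Matrix m n ℝ) : frob (A - B) = frob (B - A) := by
  simpa only [frob_eq_norm] using norm_sub_rev A B

lemma frob_transpose (A : Matrix m n ℝ) : frob Aᵀ = frob A := by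
  simpa only [frob_eq_norm] using frobenius_norm_transpose A

end Frobenius

section L2Operator

open scoped Matrix.Norms.L2Operator

lemma spec_eq_norm [DecidableEq n] (A : Matrix m n ℝ) : spec A = ‖A‖ := rfl

lemma spec_nonneg [DecidableEq n] (A : Matrix m n ℝ) : 0 ≤ spec A := norm_nonneg _

lemma spec_transpose [DecidableEq m] [DecidableEq n] (A : Matrix m n ℝ) :
    spec Aᵀ = spec A := by
  simpa only [spec_eq_norm, conjTranspose_eq_transpose_of_trivial]
    using l2_opNorm_conjTranspose A

lemma norm_mulVec_le_spec_mul [DecidableEq n] (A : Matrix m n ℝ) (x : n → ℝ) :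
    ‖WithLp.toLp 2 (A *ᵥ x)‖ ≤ spec A * ‖WithLp.toLp 2 x‖ :=
  l2_opNorm_mulVec A (WithLp.toLp 2 x)

end L2Operator

lemma frob_sq (A : Matrix m n ℝ) : frob A ^ 2 = ∑ i, ∑ j, A i j ^ 2 :=
  Real.sq_sqrt (by positivity)

lemma frob_sq_eq_sum_norm_col_sq (A : Matrix m n ℝ) :
    frob A ^ 2 = ∑ j, ‖WithLp.toLp 2 (fun i => A i j)‖ ^ 2 := by
  simp [frob_sq, EuclideanSpace.norm_sq_eq, Finset.sum_comm (γ := m)]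

lemma frob_mul_le_spec_mul_frob [DecidableEq n] (A : Matrix m n ℝ) (M : Matrix n k ℝ) :
    frob (A * M) ≤ spec A * frob M := by
  have hcol : ∀ j, (fun i => (A * M) i j) = A *ᵥ fun i => M i j := fun _ => rfl
  refine le_of_sq_le_sq ?_ (mul_nonneg (spec_nonneg A) (frob_nonneg M))
  rw [mul_pow, frob_sq_eq_sum_norm_col_sq, frob_sq_eq_sum_norm_col_sq, Finset.mul_sum]
  gcongr with j
  rw [hcol, ← mul_pow]
  exact pow_le_pow_left₀ (norm_nonneg _) (norm_mulVec_le_spec_mul A _) 2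

lemma frob_mul_le_frob_mul_spec [DecidableEq n] [DecidableEq k]
    (M : Matrix m n ℝ) (A : Matrix n k ℝ) : frob (M * A) ≤ frob M * spec A := by
  rw [← frob_transpose, transpose_mul, ← spec_transpose A, ← frob_transpose M, mul_comm]
  exact frob_mul_le_spec_mul_frob Aᵀ Mᵀ

lemma frob_fromBlocks_sq {m' n' : Type*} [Fintype m'] [Fintype n']
    (A : Matrix m n ℝ) (B : Matrix m n' ℝ) (C : Matrix m' n ℝ) (D : Matrix m' n' ℝ) :
    frob (fromBlocks A B C D) ^ 2 = frob A ^ 2 + frob B ^ 2 + frob C ^ 2 + frob D ^ 2 := by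
  simp only [frob_sq, Fintype.sum_sum_type, fromBlocks_apply₁₁, fromBlocks_apply₁₂,
    fromBlocks_apply₂₁, fromBlocks_apply₂₂, Finset.sum_add_distrib]
  ring

lemma frob_mul_inv_mul_sub_le [DecidableEq n] [DecidableEq k]
    {B B' : Matrix n n ℝ} (hB : IsUnit B) (hB' : IsUnit B')
    {D₁ D₁' : Matrix m n ℝ} {D₂ D₂' : Matrix n k ℝ} {ρ θ : ℝ}
    (hρ : spec (D₁ * B⁻¹) ≤ ρ) (hθ : spec (B'⁻¹ * D₂') ≤ θ) :
    frob (D₁ * B⁻¹ * D₂ - D₁' * B'⁻¹ * D₂') ≤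
      ρ * frob (D₂ - D₂') + ρ * θ * frob (B - B') + θ * frob (D₁ - D₁') := by
  have hρ0 : 0 ≤ ρ := (spec_nonneg _).trans hρ
  have h₁ : frob (D₁ * B⁻¹ * (D₂ - D₂')) ≤ ρ * frob (D₂ - D₂') :=
    (frob_mul_le_spec_mul_frob _ _).trans (by gcongr; exact frob_nonneg _)
  have h₂ : frob (D₁ * B⁻¹ * ((B' - B) * (B'⁻¹ * D₂'))) ≤ ρ * θ * frob (B - B') := calc
    _ ≤ ρ * frob ((B' - B) * (B'⁻¹ * D₂')) :=
      (frob_mul_le_spec_mul_frob _ _).trans (by gcongr; exact frob_nonneg _)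
    _ ≤ ρ * (frob (B - B') * θ) := by
      rw [frob_sub_comm]
      gcongr
      exact (frob_mul_le_frob_mul_spec _ _).trans (by gcongr; exact frob_nonneg _)
    _ = ρ * θ * frob (B - B') := by ring
  have h₃ : frob ((D₁ - D₁') * (B'⁻¹ * D₂')) ≤ θ * frob (D₁ - D₁') :=
    (frob_mul_le_frob_mul_spec _ _).trans (by rw [mul_comm]; gcongr; exact frob_nonneg _)
  rw [mul_inv_mul_sub_mul_inv_mul hB hB']
  linarith [frob_add_le (D₁ * B⁻¹ * (D₂ - D₂') + D₁ * B⁻¹ * ((B' - B) * (B'⁻¹ * D₂')))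
    ((D₁ - D₁') * (B'⁻¹ * D₂')), frob_add_le (D₁ * B⁻¹ * (D₂ - D₂'))
    (D₁ * B⁻¹ * ((B' - B) * (B'⁻¹ * D₂')))]

end Norms

/-- Quantitative block error bound: if ρ ≤ (4+√3)/(3√3) and θ ≤ 1/√3 then
‖W‖_F² ≤ 5(‖B − B̃‖_F² + ‖D₁ − D̃₁‖_F² + ‖D₂ − D̃₂‖_F²). -/
theorem stmt_18 {p₁ p₂ r : ℕ}
    (B Bt : Matrix (Fin r) (Fin r) ℝ) (hB : IsUnit B) (hBt : IsUnit Bt)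
    (D₁ D₁t : Matrix (Fin (p₁ - r)) (Fin r) ℝ)
    (D₂ D₂t : Matrix (Fin (p₂ - r)) (Fin r) ℝ)
    (ρ θ : ℝ)
    (hρ : max (spec (D₁ * B⁻¹)) (spec (B⁻¹ * D₂ᵀ)) ≤ ρ)
    (hθ : max (spec (D₁t * Bt⁻¹)) (spec (Bt⁻¹ * D₂tᵀ)) ≤ θ)
    (hρub : ρ ≤ (4 + Real.sqrt 3) / (3 * Real.sqrt 3))
    (hθub : θ ≤ 1 / Real.sqrt 3)
    (W : Matrix (Fin r ⊕ Fin (p₁ - r)) (Fin r ⊕ Fin (p₂ - r)) ℝ)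
    (hW : W = fromBlocks (B - Bt) (D₂ᵀ - D₂tᵀ) (D₁ - D₁t)
        (D₁ * B⁻¹ * D₂ᵀ - D₁t * Bt⁻¹ * D₂tᵀ)) :
    frob W ^ 2 ≤ 5 * (frob (B - Bt) ^ 2 + frob (D₁ - D₁t) ^ 2 + frob (D₂ - D₂t) ^ 2) := by
  have hρ₁ : spec (D₁ * B⁻¹) ≤ ρ := (le_max_left _ _).trans hρ
  have hθ₁ : spec (Bt⁻¹ * D₂tᵀ) ≤ θ := (le_max_right _ _).trans hθ
  have hρ0 : 0 ≤ ρ := (spec_nonneg _).trans hρ₁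
  have hθ0 : 0 ≤ θ := (spec_nonneg _).trans hθ₁
  have hρ2 : ρ ^ 2 ≤ 4 / 3 := sq_le_four_thirds_of_le hρ0 hρub
  have hθ2 : θ ^ 2 ≤ 1 := pow_le_one₀ hθ0 (le_one_of_le_one_div_sqrt_three hθub)
  have hρθ2 : (ρ * θ) ^ 2 ≤ 4 / 3 := by
    rw [mul_pow]
    nlinarith [sq_nonneg ρ]
  have hΔ := frob_mul_inv_mul_sub_le hB hBt (D₂ := D₂ᵀ) (D₁' := D₁t) hρ₁ hθ₁
  rw [← transpose_sub, frob_transpose] at hΔ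
  have hΔ2 := (pow_le_pow_left₀ (frob_nonneg _) hΔ 2).trans
    (sq_mul_add_mul_add_mul_le hρ2 hρθ2 (hθ2.trans (by norm_num)) _ _ _)
  rw [hW, frob_fromBlocks_sq, ← transpose_sub, frob_transpose]
  linarith
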